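/- arXiv:2408.09376 — 4 statements merged into one kernel-verified Lean document; each statement's English description precedes it below -/
import Mathlib

section
/- Under the DS pricing scheme, a matched driver's utility change from misreporting satisfies u_d - ū_d = (τ_{dr} - τ_d^{min})(b_d - b̄_d)(1 - λ_d). In particular, if τ_{dr} ≥ τ_d^{min} and 0 ≤ λ_d ≤ 1, then the driver's utility change has the same sign as b_d - b̄_d: under-reporting (b_d < b̄_d) cannot increase utility, while over-reporting weakly increases it. -/
/-- Misreporting effect for a matched driver under the DS pricing scheme. -/
theorem ds_driver_misreport
    (α hr τdr τmin ftr Prv C lamD bTrue : ℝ)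
    (Pd : ℝ → ℝ) (hPd : ∀ b, Pd b = α * hr + b * (τdr - τmin) + ftr)
    (V : ℝ → ℝ) (hV : ∀ b, V b = (Prv - Pd b) + C)
    (ρ : ℝ → ℝ) (hρ : ∀ b, ρ b = V b * lamD)
    (q : ℝ → ℝ) (hq : ∀ b, q b = Pd b + ρ b)
    (u : ℝ → ℝ) (hu : ∀ b, u b = q b - Pd bTrue) :
    (∀ b, u b - u bTrue = (τdr - τmin) * (b - bTrue) * (1 - lamD)) ∧
    (τmin ≤ τdr → 0 ≤ lamD → lamD ≤ 1 →
      (∀ b, b < bTrue → u b ≤ u bTrue) ∧ (∀ b, bTrue ≤ b → u bTrue ≤ u b)) := by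
  have key : ∀ b, u b - u bTrue = (τdr - τmin) * (b - bTrue) * (1 - lamD) := by
    intro b
    simp only [hu, hq, hρ, hV, hPd]
    ring
  refine ⟨key, fun hτ hl0 hl1 => ⟨fun b hb => ?_, fun b hb => ?_⟩⟩
  · nlinarith [key b, mul_nonneg (mul_nonneg (sub_nonneg.2 hτ) (sub_nonneg.2 hb.le)) (sub_nonneg.2 hl1)]
  · nlinarith [key b, mul_nonneg (mul_nonneg (sub_nonneg.2 hτ) (sub_nonneg.2 hb)) (sub_nonneg.2 hl1)]
end

section
/- Under the DS pricing scheme, a matched rider's utility change from misreporting satisfies u_r - ū_r = (τ_{dr} - τ_r^{min})(δ_r - δ̄_r)(1 - λ_r). In particular, if τ_{dr} ≥ τ_r^{min} and 0 ≤ λ_r ≤ 1, then under-reporting δ_r < δ̄_r cannot increase the rider's utility. -/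
/-- Misreporting effect for a matched rider under the DS pricing scheme. -/
theorem ds_rider_misreport
    (β hr τdr τmin Pdv C lamR δTrue : ℝ)
    (Pr : ℝ → ℝ) (hPr : ∀ δ, Pr δ = β * hr - δ * (τdr - τmin))
    (V : ℝ → ℝ) (hV : ∀ δ, V δ = (Pr δ - Pdv) + C)
    (ρ : ℝ → ℝ) (hρ : ∀ δ, ρ δ = V δ * lamR)
    (q : ℝ → ℝ) (hq : ∀ δ, q δ = Pr δ - ρ δ)
    (u : ℝ → ℝ) (hu : ∀ δ, u δ = Pr δTrue - q δ) :
    (∀ δ, u δ - u δTrue = (τdr - τmin) * (δ - δTrue) * (1 - lamR)) ∧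
    (τmin ≤ τdr → 0 ≤ lamR → lamR ≤ 1 →
      ∀ δ, δ < δTrue → u δ ≤ u δTrue) := by
  have key : ∀ δ, u δ - u δTrue = (τdr - τmin) * (δ - δTrue) * (1 - lamR) := by
    intro δ
    simp only [hu, hq, hρ, hV, hPr]
    ring
  refine ⟨key, fun hτ hl0 hl1 δ hδ => ?_⟩
  have := key δ
  nlinarith [mul_nonneg (sub_nonneg.mpr hτ) (sub_nonneg.mpr hl1)]
end

section
/- Group incentive compatibility: suppose every matched driver d bids b_d = b̄_d + ε_d and every matched rider r bids δ_r = δ̄_r + ε_r, with arbitrary reals ε_d, ε_r, and suppose the matching and the shares λ_d, λ_r (which sum to 1 over matched participants) are unaffected by the bids. Then the total utility of all matched participants, Σ_d u_d + Σ_r u_r, equals the total social welfare V̄ under truthful reporting, independently of the ε's. -/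
/-- Group incentive compatibility (G-IC): the total utility of all matched
participants equals the truthful total social welfare, regardless of the
misreporting perturbations `εd, εr`. -/
theorem ds_group_incentive_compatible {ι : Type*} [Fintype ι]
    (α β : ℝ) (h τ τdmin τrmin f bbar δbar εd εr lamD lamR : ι → ℝ)
    (hlamD : ∀ i, 0 ≤ lamD i) (hlamR : ∀ i, 0 ≤ lamR i)
    (hsum : (∑ i, lamD i) + (∑ i, lamR i) = 1)
    (Pdbar Prbar Pd Pr : ι → ℝ)
    (hPdbar : ∀ i, Pdbar i = α * h i + bbar i * (τ i - τdmin i) + f i)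
    (hPrbar : ∀ i, Prbar i = β * h i - δbar i * (τ i - τrmin i))
    (hPd : ∀ i, Pd i = α * h i + (bbar i + εd i) * (τ i - τdmin i) + f i)
    (hPr : ∀ i, Pr i = β * h i - (δbar i + εr i) * (τ i - τrmin i))
    (V Vbar : ℝ)
    (hV : V = ∑ i, (Pr i - Pd i)) (hVbar : Vbar = ∑ i, (Prbar i - Pdbar i))
    (ud ur : ι → ℝ)
    (hud : ∀ i, ud i = (Pd i + V * lamD i) - Pdbar i)
    (hur : ∀ i, ur i = Prbar i - (Pr i - V * lamR i)) :
    (∑ i, ud i) + (∑ i, ur i) = Vbar := by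
  have key : (∑ i, ud i) + (∑ i, ur i)
      = (∑ i, (Prbar i - Pdbar i)) - (∑ i, (Pr i - Pd i))
        + V * ((∑ i, lamD i) + (∑ i, lamR i)) := by
    simp only [hud, hur, Finset.sum_sub_distrib, Finset.sum_add_distrib,
      ← Finset.mul_sum]
    ring
  rw [key, hsum, mul_one, ← hV, ← hVbar]
  ring
end

section
/- With the modified charge q_r = max(P_r - ρ_r, α·h_r) and under the assumption that each rider's valuation satisfies P_r ≥ α·h_r (since β > α) and bonuses are nonnegative, the DS scheme is weakly budget balancing: Σ_{r∈R*} q_r - Σ_{d∈D*} q_d = Σ_{r∈R*} max(0, α·h_r - (P_r - ρ_r)) ≥ 0. -/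
/-- Weak budget balance of the DS scheme with the modified (lower-bounded)
rider charges. -/
theorem ds_weak_budget_balance {ι : Type*} [Fintype ι]
    (α : ℝ) (Pd Pr hdist lamD lamR : ι → ℝ)
    (hlamD : ∀ i, 0 ≤ lamD i) (hlamR : ∀ i, 0 ≤ lamR i)
    (hsum : (∑ i, lamD i) + (∑ i, lamR i) = 1)
    (V : ℝ) (hV : V = ∑ i, (Pr i - Pd i)) (hVnonneg : 0 ≤ V)
    (hPr : ∀ i, α * hdist i ≤ Pr i)
    (qd qr : ι → ℝ)
    (hqd : ∀ i, qd i = Pd i + V * lamD i)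
    (hqr : ∀ i, qr i = max (Pr i - V * lamR i) (α * hdist i)) :
    (∑ i, qr i) - (∑ i, qd i)
      = ∑ i, max 0 (α * hdist i - (Pr i - V * lamR i)) ∧
    0 ≤ (∑ i, qr i) - (∑ i, qd i) := by
  have hq : ∀ i, qr i = (Pr i - V * lamR i)
      + max 0 (α * hdist i - (Pr i - V * lamR i)) := by
    intro i
    rw [hqr i]
    rcases le_total (α * hdist i) (Pr i - V * lamR i) with h | h
    · rw [max_eq_left h, max_eq_left (by linarith)]; ring
    · rw [max_eq_right h, max_eq_right (by linarith)]; ring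
  have key : (∑ i, qr i) - (∑ i, qd i)
      = ∑ i, max 0 (α * hdist i - (Pr i - V * lamR i)) := by
    simp only [hq, hqd, Finset.sum_add_distrib, Finset.sum_sub_distrib,
      ← Finset.mul_sum]
    have h2 : V * ((∑ i, lamD i) + (∑ i, lamR i)) = V := by rw [hsum, mul_one]
    have h3 : (∑ i, Pr i) - (∑ i, Pd i) = V := by
      rw [hV, Finset.sum_sub_distrib]
    linarith
  refine ⟨key, key ▸ Finset.sum_nonneg fun i _ => le_max_left _ _⟩
end
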